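/- For every integer n ≥ 1, the Vandermonde determinant Δ(x) = ∏_{1 ≤ i < j ≤ n} (x_i − x_j) satisfies ∑_{i=1}^n x_i ∂²Δ/∂x_i² = 0 identically on ℝ^n. -/

import Mathlib

noncomputable def pd {n : ℕ} (i : Fin n) (f : (Fin n → ℝ) → ℝ) (x : Fin n → ℝ) : ℝ :=
  deriv (fun t => f (Function.update x i t)) (x i)

noncomputable def vd {n : ℕ} (x : Fin n → ℝ) : ℝ :=
  ∏ i : Fin n, ∏ j ∈ Finset.Ioi i, (x i - x j)

/-!
Along the `i`-th coordinate line, `Δ` is `cᵢ · ∏_{j ≠ i} (t - x_j)` with `cᵢ` independent of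
`x_i`, so `∂ᵢ²Δ = cᵢ ∑_{j ≠ k} ∏_{l ∉ {i,j,k}} (x_i - x_l)`; when the coordinates are distinct
this is `Δ ∑_{j ≠ k} 1 / ((x_i - x_j)(x_i - x_k))`. Summing `x_i ∂ᵢ²Δ` over `i` and grouping
each ordered triple `(i, j, k)` with its cyclic rotations, everything cancels by the
partial-fraction identity `a/((a-b)(a-c)) + b/((b-c)(b-a)) + c/((c-a)(c-b)) = 0`.
Tuples with distinct coordinates are dense and `∑ x_i ∂ᵢ²Δ` is continuous, so it vanishes
everywhere.
-/

open Finset Function Lagrange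
open scoped Polynomial
open Polynomial (derivative derivative_sum eval_finsetSum)

section PairProducts

variable {α M : Type*} [LinearOrder α] [Fintype α] [LocallyFiniteOrderTop α]
  [LocallyFiniteOrderBot α] [CommMonoid M]

theorem prod_prod_Ioi_eq_mul_prod_prod_Ioi_erase (f : α → α → M) (i : α) :
    ∏ a, ∏ b ∈ Ioi a, f a b =
      (∏ b ∈ Ioi i, f i b) * (∏ a ∈ Iio i, f a i) * ∏ a ∈ {i}ᶜ, ∏ b ∈ (Ioi a).erase i, f a b := by
  have hsplit : ∀ a, ∏ b ∈ Ioi a, f a b =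
      (∏ b ∈ (Ioi a).erase i, f a b) * if a ∈ Iio i then f a i else 1 := by
    intro a
    by_cases h : a < i
    · rw [if_pos (mem_Iio.2 h), prod_erase_mul _ _ (mem_Ioi.2 h)]
    · rw [if_neg (by simpa using h), mul_one, erase_eq_of_notMem (by simpa using h)]
  rw [prod_congr rfl fun a _ => hsplit a, prod_mul_distrib, prod_ite_mem, univ_inter,
    Fintype.prod_eq_mul_prod_compl i, erase_eq_of_notMem notMem_Ioi_self]
  ac_rfl

theorem prod_Ioi_mul_prod_Iio_eq_prod_compl (f : α → M) (i : α) :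
    (∏ b ∈ Ioi i, f b) * ∏ a ∈ Iio i, f a = ∏ a ∈ {i}ᶜ, f a := by
  rw [← Ioi_disjUnion_Iio, prod_disjUnion]

end PairProducts

section DistinctTriples

variable {α M : Type*} [Fintype α] [DecidableEq α] [AddCommMonoid M]

theorem sum_sum_erase_sum_erase_eq_sum_ite (f : α → α → α → M) :
    ∑ i, ∑ j ∈ {i}ᶜ, ∑ k ∈ ({i}ᶜ : Finset α).erase j, f i j k =
      ∑ i, ∑ j, ∑ k, if i ≠ j ∧ i ≠ k ∧ j ≠ k then f i j k else 0 := by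
  refine sum_congr rfl fun i _ => ?_
  rw [← sum_subset (subset_univ {i}ᶜ)]
  · refine sum_congr rfl fun j hj => ?_
    rw [← sum_filter]
    congr 1
    ext k
    simp only [mem_erase, mem_compl, mem_singleton, mem_filter, mem_univ, true_and] at hj ⊢
    tauto
  · intro j _ hj
    simp_all

theorem sum_sum_erase_sum_erase_eq_zero_of_cyclic [IsAddTorsionFree M] (f : α → α → α → M)
    (hf : ∀ i j k, i ≠ j → i ≠ k → j ≠ k → f i j k + f j k i + f k i j = 0) :
    ∑ i, ∑ j ∈ {i}ᶜ, ∑ k ∈ ({i}ᶜ : Finset α).erase j, f i j k = 0 := by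
  set g : α → α → α → M := fun i j k => if i ≠ j ∧ i ≠ k ∧ j ≠ k then f i j k else 0
  have hrotate : ∀ h : α → α → α → M, ∑ i, ∑ j, ∑ k, h j k i = ∑ i, ∑ j, ∑ k, h i j k := by
    intro h
    rw [sum_comm]
    exact sum_congr rfl fun _ _ => sum_comm
  have hg : ∀ i j k, g i j k + g j k i + g k i j = 0 := by
    intro i j k
    by_cases h : i ≠ j ∧ i ≠ k ∧ j ≠ k
    · simp only [g, if_pos h, if_pos (show j ≠ k ∧ j ≠ i ∧ k ≠ i by tauto),
        if_pos (show k ≠ i ∧ k ≠ j ∧ i ≠ j by tauto)]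
      exact hf i j k h.1 h.2.1 h.2.2
    · simp only [g, if_neg h, if_neg (show ¬(j ≠ k ∧ j ≠ i ∧ k ≠ i) by tauto),
        if_neg (show ¬(k ≠ i ∧ k ≠ j ∧ i ≠ j) by tauto), add_zero]
  rw [sum_sum_erase_sum_erase_eq_sum_ite, ← nsmul_eq_zero_iff_right three_ne_zero]
  calc 3 • ∑ i, ∑ j, ∑ k, g i j k
      = ∑ i, ∑ j, ∑ k, g i j k + ∑ i, ∑ j, ∑ k, g j k i + ∑ i, ∑ j, ∑ k, g k i j := by
        rw [hrotate g, ← hrotate fun i j k => g k i j]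
        abel
    _ = 0 := by simp only [← sum_add_distrib, hg, sum_const_zero]

end DistinctTriples

theorem div_add_div_add_div_cyclic_eq_zero {K : Type*} [Field K] {a b c : K} (hab : a ≠ b)
    (hbc : b ≠ c) (hca : c ≠ a) :
    a / ((a - b) * (a - c)) + b / ((b - c) * (b - a)) + c / ((c - a) * (c - b)) = 0 := by
  have := sub_ne_zero.2 hab
  have := sub_ne_zero.2 hbc
  have := sub_ne_zero.2 hca
  field_simp
  ring

section Nodal

variable {ι R : Type*} [CommRing R] [DecidableEq ι]

theorem nodal_update {s : Finset ι} {i : ι} (hi : i ∉ s) (v : ι → R) (r : R) :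
    nodal s (update v i r) = nodal s v :=
  prod_congr rfl fun j hj => by rw [update_of_ne (ne_of_mem_of_not_mem hj hi)]

theorem eval_derivative_derivative_nodal (s : Finset ι) (v : ι → R) (t : R) :
    (derivative (derivative (nodal s v))).eval t =
      ∑ j ∈ s, ∑ k ∈ s.erase j, ∏ l ∈ (s.erase j).erase k, (t - v l) := by
  simp only [derivative_nodal, derivative_sum, eval_finsetSum, eval_nodal]

end Nodal

theorem pd_update_eq_mul_eval_derivative {n : ℕ} {f c : (Fin n → ℝ) → ℝ}
    {p : (Fin n → ℝ) → ℝ[X]} {i : Fin n} (hf : ∀ x t, f (update x i t) = c x * (p x).eval t)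
    (x : Fin n → ℝ) (t : ℝ) :
    pd i f (update x i t) = c x * (derivative (p x)).eval t := by
  have hline : (fun s => f (update (update x i t) i s)) = fun s => c x * (p x).eval s := by
    funext s
    rw [update_idem, hf]
  rw [pd, hline, update_self]
  exact ((p x).hasDerivAt t).const_mul (c x) |>.deriv

section Injective

variable {ι : Type*} [Countable ι]

theorem countable_setOf_not_injective_add_smul (x v : ι → ℝ) (hv : Injective v) :
    {t : ℝ | ¬Injective (x + t • v)}.Countable := by
  refine (Set.countable_range fun p : ι × ι => (x p.2 - x p.1) / (v p.1 - v p.2)).mono ?_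
  intro t ht
  obtain ⟨i, j, hxij, hij⟩ : ∃ i j, (x + t • v) i = (x + t • v) j ∧ i ≠ j := by
    simpa [Injective] using ht
  refine ⟨(i, j), ?_⟩
  have : v i - v j ≠ 0 := sub_ne_zero.2 (hv.ne hij)
  simp only [Pi.add_apply, Pi.smul_apply, smul_eq_mul] at hxij
  field_simp
  linarith

theorem dense_setOf_injective : Dense {x : ι → ℝ | Injective x} := by
  obtain ⟨e, he⟩ := Countable.exists_injective_nat ι
  set v : ι → ℝ := fun i => (e i : ℝ)
  have hv : Injective v := Nat.cast_injective.comp he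
  intro x
  have hline : Continuous fun t : ℝ => x + t • v := by fun_prop
  have hdense : Dense {t : ℝ | Injective (x + t • v)} := by
    simpa only [Set.compl_ofPred, not_not] using
      (countable_setOf_not_injective_add_smul x v hv).dense_compl ℝ
  have := map_mem_closure hline (hdense 0) (t := {x : ι → ℝ | Injective x}) fun t ht => ht
  rwa [zero_smul, add_zero] at this

end Injective

section Vandermonde

variable {n : ℕ}

/-- The sign `(-1) ^ i` turns the factors `x a - x i`, `a < i`, of `vd` into `x i - x a`. -/
noncomputable def vdCofactor (i : Fin n) (x : Fin n → ℝ) : ℝ :=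
  (-1) ^ (i : ℕ) * ∏ a ∈ {i}ᶜ, ∏ b ∈ (Ioi a).erase i, (x a - x b)

theorem vdCofactor_update (i : Fin n) (x : Fin n → ℝ) (t : ℝ) :
    vdCofactor i (update x i t) = vdCofactor i x := by
  unfold vdCofactor
  congr 1
  refine prod_congr rfl fun a ha => prod_congr rfl fun b hb => ?_
  rw [update_of_ne (by simpa using ha), update_of_ne (ne_of_mem_erase hb)]

theorem vd_eq_vdCofactor_mul (i : Fin n) (x : Fin n → ℝ) :
    vd x = vdCofactor i x * ∏ a ∈ {i}ᶜ, (x i - x a) := by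
  have hIio : ∏ a ∈ Iio i, (x a - x i) = (-1) ^ (i : ℕ) * ∏ a ∈ Iio i, (x i - x a) := by
    rw [← Fin.card_Iio i, ← prod_const, ← prod_mul_distrib]
    exact prod_congr rfl fun a _ => by ring
  rw [vd, prod_prod_Ioi_eq_mul_prod_prod_Ioi_erase _ i, hIio, vdCofactor,
    ← prod_Ioi_mul_prod_Iio_eq_prod_compl (fun a => x i - x a)]
  ring

theorem vd_update (i : Fin n) (x : Fin n → ℝ) (t : ℝ) :
    vd (update x i t) = vdCofactor i x * (nodal {i}ᶜ x).eval t := by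
  rw [vd_eq_vdCofactor_mul i, vdCofactor_update,
    ← nodal_update (notMem_compl.2 (mem_singleton_self i)) x t, eval_nodal, update_self]

theorem pd_pd_vd (i : Fin n) (x : Fin n → ℝ) :
    pd i (pd i vd) x = vdCofactor i x * ∑ j ∈ {i}ᶜ, ∑ k ∈ ({i}ᶜ : Finset _).erase j,
      ∏ l ∈ (({i}ᶜ : Finset _).erase j).erase k, (x i - x l) := by
  have h := pd_update_eq_mul_eval_derivative
    (pd_update_eq_mul_eval_derivative (vd_update i)) x (x i)
  rwa [update_eq_self, eval_derivative_derivative_nodal] at h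

@[fun_prop]
theorem continuous_pd_pd_vd (i : Fin n) : Continuous (pd i (pd i vd)) := by
  rw [show pd i (pd i vd) = _ from funext (pd_pd_vd i)]
  unfold vdCofactor
  fun_prop

theorem vdCofactor_mul_prod_erase_erase_mul {i j k : Fin n} (hj : j ∈ ({i}ᶜ : Finset _))
    (hk : k ∈ ({i}ᶜ : Finset _).erase j) (x : Fin n → ℝ) :
    vdCofactor i x * (∏ l ∈ (({i}ᶜ : Finset _).erase j).erase k, (x i - x l)) *
      ((x i - x j) * (x i - x k)) = vd x := by
  rw [vd_eq_vdCofactor_mul i, ← mul_prod_erase _ _ hj, ← mul_prod_erase _ _ hk]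
  ring

theorem sum_mul_pd_pd_vd_of_injective {x : Fin n → ℝ} (hx : Injective x) :
    ∑ i, x i * pd i (pd i vd) x = 0 := by
  have hterm : ∀ i, ∀ j ∈ ({i}ᶜ : Finset _), ∀ k ∈ ({i}ᶜ : Finset _).erase j,
      x i * (vdCofactor i x * ∏ l ∈ (({i}ᶜ : Finset _).erase j).erase k, (x i - x l)) =
        vd x * (x i / ((x i - x j) * (x i - x k))) := by
    intro i j hj k hk
    have hij : x i - x j ≠ 0 := sub_ne_zero.2 (hx.ne (by simpa [eq_comm] using hj))
    have hik : x i - x k ≠ 0 := sub_ne_zero.2 (hx.ne (by simp_all [eq_comm]))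
    rw [← vdCofactor_mul_prod_erase_erase_mul hj hk]
    field_simp
  simp only [pd_pd_vd, mul_sum]
  rw [sum_congr rfl fun i _ => sum_congr rfl fun j hj => sum_congr rfl (hterm i j hj)]
  simp only [← mul_sum]
  rw [sum_sum_erase_sum_erase_eq_zero_of_cyclic, mul_zero]
  intro i j k hij hik hjk
  exact div_add_div_add_div_cyclic_eq_zero (hx.ne hij) (hx.ne hjk) (hx.ne hik.symm)

end Vandermonde

theorem sum_weighted_second_pderiv_vandermonde_eq_zero_general (n : ℕ)
    (x : Fin n → ℝ) :
    ∑ i : Fin n, x i * pd i (pd i vd) x = 0 := by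
  have hcont : Continuous fun x : Fin n → ℝ => ∑ i, x i * pd i (pd i vd) x := by fun_prop
  have h := hcont.ext_on dense_setOf_injective continuous_const
    fun x hx => sum_mul_pd_pd_vd_of_injective hx
  exact congrFun h x

theorem sum_weighted_second_pderiv_vandermonde_eq_zero (n : ℕ) (hn : 1 ≤ n)
    (x : Fin n → ℝ) :
    ∑ i : Fin n, x i * pd i (pd i vd) x = 0 :=
  sum_weighted_second_pderiv_vandermonde_eq_zero_general n x
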